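/- arXiv:1205.1544 — 2 statements merged into one kernel-verified Lean document; each statement's English description precedes it below -/
import Mathlib

section
/- Let ρ > 0, N ≥ 2, K ∈ ℕ, and suppose E : [3, ∞) → [0,∞) satisfies E(k) = ∫_{|y| < 2^k ρ} |w(y)|² dy for an L² function w. If |K(z)| ≤ C₀|z|^{-N} and p₂(x) = ∫_{|y| ≥ 2ρ} K(x−y)|w(y)|² dy, then for all |x| ≤ ρ: |p₂(x)| ≤ C ρ^{-N} [ Σ_{k=3}^{K} 2^{-Nk} E(k) + 2^{-NK} ‖w‖_{L²}² ], where C depends only on N and C₀. (Dyadic decomposition of the nonlocal pressure.) -/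
open MeasureTheory Set

/-!
For `‖x‖ ≤ ρ ≤ ‖y‖ / 2` we have `‖x - y‖ ≥ ‖y‖ / 2`, so `|K(x - y)| ≤ 2^N C₀ ‖y‖^{-N}`.
On the shell `2^{k-2} ρ ≤ ‖y‖ < 2^k ρ` (the first one, `k = 3`, starts at `2ρ`)
we have `‖y‖^{-N} ≤ 4^N ρ^{-N} 2^{-Nk}`, and beyond `2^K ρ` we have
`‖y‖^{-N} ≤ ρ^{-N} 2^{-NK}`. Hence, on `‖y‖ ≥ 2ρ`,
`‖y‖^{-N} ≤ 4^N ρ^{-N} (Σ_{k=3}^K 2^{-Nk} 1_{‖y‖ < 2^k ρ} + 2^{-NK})`,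
and integrating this weight against `‖w‖²` gives the bracket on the right,
with `C = 8^N C₀`.
-/

noncomputable def dyadicWeight (s ρ : ℝ) (K : ℕ) (t : ℝ) : ℝ :=
  ∑ k ∈ Finset.Icc 3 K, (2:ℝ) ^ (-s * k) * (if t < 2 ^ k * ρ then 1 else 0) + 2 ^ (-s * K)

lemma dyadicWeight_nonneg (s ρ : ℝ) (K : ℕ) (t : ℝ) : 0 ≤ dyadicWeight s ρ K t :=
  add_nonneg (Finset.sum_nonneg fun _ _ => by positivity) (by positivity)

lemma exists_dyadic_shell {ρ t : ℝ} {K : ℕ} (hρ : 0 ≤ ρ) (hK : 3 ≤ K) (ht : 2 * ρ ≤ t)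
    (htK : t < 2 ^ K * ρ) : ∃ k ∈ Finset.Icc 3 K, 2 ^ k * ρ ≤ 4 * t ∧ t < 2 ^ k * ρ := by
  induction K, hK using Nat.le_induction with
  | base => exact ⟨3, by simp, by linarith, htK⟩
  | succ K hK ih =>
    by_cases htK' : t < 2 ^ K * ρ
    · obtain ⟨k, hk, hkt⟩ := ih htK'
      exact ⟨k, Finset.Icc_subset_Icc_right K.le_succ hk, hkt⟩
    · refine ⟨K + 1, by simp; omega, ?_, htK⟩
      rw [pow_succ]
      linarith

lemma rpow_neg_le_of_dyadic_le {s ρ t : ℝ} (hs : 0 ≤ s) (hρ : 0 < ρ) {k : ℕ}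
    (hkt : 2 ^ k * ρ ≤ 4 * t) : t ^ (-s) ≤ 4 ^ s * ρ ^ (-s) * 2 ^ (-s * k) := by
  calc t ^ (-s) ≤ (2 ^ k * ρ / 4) ^ (-s) :=
        Real.rpow_le_rpow_of_nonpos (by positivity) (by linarith) (neg_nonpos.mpr hs)
    _ = 4 ^ s * ρ ^ (-s) * 2 ^ (-s * k) := by
        rw [Real.div_rpow (by positivity) (by norm_num), Real.mul_rpow (by positivity) hρ.le,
          ← Real.rpow_natCast, ← Real.rpow_mul (by norm_num),
          Real.rpow_neg (by norm_num : (0:ℝ) ≤ 4)]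
        field_simp

lemma rpow_neg_le_dyadicWeight {s ρ t : ℝ} {K : ℕ} (hs : 0 ≤ s) (hρ : 0 < ρ) (hK : 3 ≤ K)
    (ht : 2 * ρ ≤ t) : t ^ (-s) ≤ 4 ^ s * ρ ^ (-s) * dyadicWeight s ρ K t := by
  unfold dyadicWeight
  by_cases htK : t < 2 ^ K * ρ
  · obtain ⟨k, hk, hkt, htk⟩ := exists_dyadic_shell hρ.le hK ht htK
    calc t ^ (-s) ≤ 4 ^ s * ρ ^ (-s) *
          ((2:ℝ) ^ (-s * k) * if t < 2 ^ k * ρ then (1:ℝ) else 0) := by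
          simpa [htk] using rpow_neg_le_of_dyadic_le hs hρ hkt
      _ ≤ _ := by
          gcongr
          exact (Finset.single_le_sum (f := fun j : ℕ => (2:ℝ) ^ (-s * j) *
            if t < 2 ^ j * ρ then (1:ℝ) else 0) (fun j _ => by positivity) hk).trans
            (le_add_of_nonneg_right (by positivity))
  · have hKt : 2 ^ K * ρ ≤ 4 * t := by
      have : (0:ℝ) < 2 ^ K * ρ := by positivity
      linarith
    calc t ^ (-s) ≤ 4 ^ s * ρ ^ (-s) * 2 ^ (-s * K) := rpow_neg_le_of_dyadic_le hs hρ hKt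
      _ ≤ _ := by
          gcongr
          exact le_add_of_nonneg_left (Finset.sum_nonneg fun _ _ => by positivity)

lemma abs_apply_sub_le_dyadicWeight {E : Type*} [SeminormedAddCommGroup E] {k : E → ℝ}
    {C₀ s ρ : ℝ} {K : ℕ} (hC₀ : 0 ≤ C₀) (hs : 0 ≤ s) (hρ : 0 < ρ) (hK : 3 ≤ K)
    (hk : ∀ z, z ≠ 0 → |k z| ≤ C₀ * ‖z‖ ^ (-s)) {x y : E} (hx : ‖x‖ ≤ ρ) (hy : 2 * ρ ≤ ‖y‖) :
    |k (x - y)| ≤ 8 ^ s * C₀ * ρ ^ (-s) * dyadicWeight s ρ K ‖y‖ := by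
  have hdist : ‖y‖ / 2 ≤ ‖x - y‖ := by
    have := norm_sub_norm_le y x
    rw [norm_sub_rev] at this
    linarith
  have hy0 : 0 < ‖y‖ := by linarith
  have hne : x - y ≠ 0 := fun h => by simp [h] at hdist; linarith
  calc |k (x - y)| ≤ C₀ * ‖x - y‖ ^ (-s) := hk _ hne
    _ ≤ C₀ * (‖y‖ / 2) ^ (-s) := mul_le_mul_of_nonneg_left
        (Real.rpow_le_rpow_of_nonpos (by positivity) hdist (neg_nonpos.mpr hs)) hC₀
    _ = 2 ^ s * C₀ * ‖y‖ ^ (-s) := by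
        rw [Real.div_rpow (by positivity) (by norm_num), Real.rpow_neg (by norm_num : (0:ℝ) ≤ 2)]
        field_simp
    _ ≤ 2 ^ s * C₀ * (4 ^ s * ρ ^ (-s) * dyadicWeight s ρ K ‖y‖) := by
        gcongr
        exact rpow_neg_le_dyadicWeight hs hρ hK hy
    _ = 8 ^ s * C₀ * ρ ^ (-s) * dyadicWeight s ρ K ‖y‖ := by
        rw [show (8:ℝ) = 2 * 4 by norm_num, Real.mul_rpow (by norm_num) (by norm_num)]
        ring

lemma integral_sum_indicator_add {α ι : Type*} [MeasurableSpace α] {μ : Measure α} {f : α → ℝ}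
    (hf : Integrable f μ) {S : ι → Set α} (hS : ∀ i, MeasurableSet (S i)) (I : Finset ι)
    (c : ι → ℝ) (d : ℝ) :
    ∫ y, (∑ i ∈ I, c i * (S i).indicator f y + d * f y) ∂μ =
      ∑ i ∈ I, c i * ∫ y in S i, f y ∂μ + d * ∫ y, f y ∂μ := by
  rw [integral_add (integrable_finsetSum _ fun i _ => (hf.indicator (hS i)).const_mul _)
    (hf.const_mul _), integral_finsetSum _ fun i _ => (hf.indicator (hS i)).const_mul _,
    integral_const_mul]
  simp only [integral_const_mul, integral_indicator (hS _)]

lemma dyadicWeight_norm_mul_eq {E : Type*} [Norm E] (s ρ : ℝ) (K : ℕ) (f : E → ℝ) (y : E) :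
    dyadicWeight s ρ K ‖y‖ * f y = ∑ k ∈ Finset.Icc 3 K,
      (2:ℝ) ^ (-s * k) * {y : E | ‖y‖ < 2 ^ k * ρ}.indicator f y + 2 ^ (-s * K) * f y := by
  simp only [dyadicWeight, indicator_apply, mem_ofPred_eq, add_mul, Finset.sum_mul, mul_assoc,
    ite_mul, one_mul, zero_mul]

section Integral

variable {E : Type*} [SeminormedAddCommGroup E] [MeasurableSpace E] [OpensMeasurableSpace E]
  {μ : Measure E} {f : E → ℝ} (s ρ : ℝ) (K : ℕ)

lemma measurableSet_norm_lt (r : ℝ) : MeasurableSet {y : E | ‖y‖ < r} :=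
  measurableSet_lt continuous_norm.measurable measurable_const

lemma integrable_dyadicWeight_norm_mul (hf : Integrable f μ) :
    Integrable (fun y => dyadicWeight s ρ K ‖y‖ * f y) μ := by
  simp only [dyadicWeight_norm_mul_eq s ρ K f]
  exact (integrable_finsetSum _ fun k _ =>
    (hf.indicator (measurableSet_norm_lt _)).const_mul _).add (hf.const_mul _)

lemma integral_dyadicWeight_norm_mul (hf : Integrable f μ) :
    ∫ y, dyadicWeight s ρ K ‖y‖ * f y ∂μ = ∑ k ∈ Finset.Icc 3 K,
      (2:ℝ) ^ (-s * k) * ∫ y in {y : E | ‖y‖ < 2 ^ k * ρ}, f y ∂μ +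
        2 ^ (-s * K) * ∫ y, f y ∂μ := by
  simp only [dyadicWeight_norm_mul_eq s ρ K f]
  exact integral_sum_indicator_add hf (fun _ => measurableSet_norm_lt _) _ _ _

end Integral

theorem dyadic_pressure_bound_general (N : ℕ) :
    ∀ C₀ > (0:ℝ), ∃ C > (0:ℝ), ∀ (ρ : ℝ), 0 < ρ → ∀ (K : ℕ), 3 ≤ K →
      ∀ (Kf : EuclideanSpace ℝ (Fin N) → ℝ),
        (∀ z : EuclideanSpace ℝ (Fin N), z ≠ 0 → |Kf z| ≤ C₀ * ‖z‖ ^ (-(N:ℝ))) →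
      ∀ (w : EuclideanSpace ℝ (Fin N) → EuclideanSpace ℝ (Fin N)), MemLp w 2 volume →
      ∀ x : EuclideanSpace ℝ (Fin N), ‖x‖ ≤ ρ →
        |∫ y in {y : EuclideanSpace ℝ (Fin N) | 2 * ρ ≤ ‖y‖}, Kf (x - y) * ‖w y‖ ^ 2| ≤
          C * ρ ^ (-(N:ℝ)) *
            ((∑ k ∈ Finset.Icc 3 K, (2:ℝ) ^ (-(N:ℝ) * k) *
                ∫ y in {y : EuclideanSpace ℝ (Fin N) | ‖y‖ < 2 ^ k * ρ}, ‖w y‖ ^ 2) +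
              (2:ℝ) ^ (-(N:ℝ) * K) * ∫ y, ‖w y‖ ^ 2) := by
  intro C₀ hC₀
  refine ⟨8 ^ (N:ℝ) * C₀, by positivity, fun ρ hρ K hK Kf hKf w hw x hx => ?_⟩
  have hf : Integrable (fun y => ‖w y‖ ^ 2) := hw.integrable_norm_pow two_ne_zero
  set c := 8 ^ (N:ℝ) * C₀ * ρ ^ (-(N:ℝ))
  have hg := (integrable_dyadicWeight_norm_mul (N:ℝ) ρ K hf).const_mul c
  have hpoint : ∀ y ∈ {y : EuclideanSpace ℝ (Fin N) | 2 * ρ ≤ ‖y‖},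
      ‖Kf (x - y) * ‖w y‖ ^ 2‖ ≤ c * (dyadicWeight N ρ K ‖y‖ * ‖w y‖ ^ 2) := fun y hy => by
    rw [norm_mul, Real.norm_of_nonneg (sq_nonneg _), ← mul_assoc]
    exact mul_le_mul_of_nonneg_right
      (abs_apply_sub_le_dyadicWeight hC₀.le N.cast_nonneg hρ hK hKf hx hy) (sq_nonneg _)
  calc _ ≤ ∫ y in {y : EuclideanSpace ℝ (Fin N) | 2 * ρ ≤ ‖y‖},
          c * (dyadicWeight N ρ K ‖y‖ * ‖w y‖ ^ 2) :=
        norm_integral_le_of_norm_le hg.integrableOn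
          (ae_restrict_of_forall_mem (measurableSet_le measurable_const measurable_norm) hpoint)
    _ ≤ ∫ y, c * (dyadicWeight N ρ K ‖y‖ * ‖w y‖ ^ 2) :=
        setIntegral_le_integral hg (Filter.Eventually.of_forall fun y => by
          have := dyadicWeight_nonneg N ρ K ‖y‖
          positivity)
    _ = _ := by rw [integral_const_mul, integral_dyadicWeight_norm_mul _ _ _ hf]

/-- Dyadic decomposition of the nonlocal pressure: for `|x| ≤ ρ`,
`|p₂(x)| ≤ C ρ^{-N} (Σ_{k=3}^{K} 2^{-Nk} E(k) + 2^{-NK} ‖w‖_{L²}²)`, where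
`E(k) = ∫_{|y| < 2^k ρ} |w|²` and `C = C(N, C₀)`. -/
theorem dyadic_pressure_bound (N : ℕ) (hN : 2 ≤ N) :
    ∀ C₀ > (0:ℝ), ∃ C > (0:ℝ), ∀ (ρ : ℝ), 0 < ρ → ∀ (K : ℕ), 3 ≤ K →
      ∀ (Kf : EuclideanSpace ℝ (Fin N) → ℝ),
        (∀ z : EuclideanSpace ℝ (Fin N), z ≠ 0 → |Kf z| ≤ C₀ * ‖z‖ ^ (-(N:ℝ))) →
      ∀ (w : EuclideanSpace ℝ (Fin N) → EuclideanSpace ℝ (Fin N)), MemLp w 2 volume →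
      ∀ x : EuclideanSpace ℝ (Fin N), ‖x‖ ≤ ρ →
        |∫ y in {y : EuclideanSpace ℝ (Fin N) | 2 * ρ ≤ ‖y‖}, Kf (x - y) * ‖w y‖ ^ 2| ≤
          C * ρ ^ (-(N:ℝ)) *
            ((∑ k ∈ Finset.Icc 3 K, (2:ℝ) ^ (-(N:ℝ) * k) *
                ∫ y in {y : EuclideanSpace ℝ (Fin N) | ‖y‖ < 2 ^ k * ρ}, ‖w y‖ ^ 2) +
              (2:ℝ) ^ (-(N:ℝ) * K) * ∫ y, ‖w y‖ ^ 2) :=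
  dyadic_pressure_bound_general N
end

section
/- Let α₀ ∈ ℝ with α₀ < 2, let r > 1, and let E : [0,T) → [0,∞) be bounded and satisfy: there is a constant C such that for all t < T, E(t) ≤ C ∫_t^T f(τ) G(τ) dτ + C ∫_t^T √(G(τ)) dτ, where f ∈ L^r([0,T)) is nonnegative and G(τ) ≤ C'(T−τ)^{α} for some α > α₀ − δ with δ small. Then E(t) ≤ C''(T−t)^{β} where β = min{1 − 1/r + α₀ − δ, (α₀ − δ + 2)/2}; in particular, if α₀ < 2 then β > α₀ for δ small enough. Consequently, any supremum α₀ of exponents α < 2 for which a bound E(t) ≲ (T−t)^α holds on some ball must satisfy α₀ ≥ 2, i.e., the bootstrap closes. -/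
/-!
Write `q` for the conjugate exponent of `r`. Hölder's inequality bounds `∫_t^T f(τ)(T−τ)^α dτ`
by `‖f‖_{L^r}·(T−t)^{α+1/q}` and the explicit power integral bounds `∫_t^T √G` by a multiple of
`(T−t)^{α/2+1}`; since `α > α₀ − δ` both exponents are at least
`β = min (1 − 1/r + α₀ − δ) ((α₀ − δ + 2)/2)`, and `δ < min (1 − 1/r) (2 − α₀)` gives `β > α₀`.
When `β > 0` we have `αq > −1` and `α > −2`, so both power integrals converge; when `β ≤ 0`
the boundedness of `E` alone gives the decay bound.
-/

open MeasureTheory Set Real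

lemma integrableOn_Ioo_sub_rpow {T t p : ℝ} (ht : t ≤ T) (hp : -1 < p) :
    IntegrableOn (fun τ : ℝ => (T - τ) ^ p) (Ioo t T) := by
  have h := (intervalIntegral.intervalIntegrable_rpow' (a := 0) (b := T - t) hp).comp_sub_left T
  rw [sub_zero, sub_sub_cancel] at h
  exact ((intervalIntegrable_iff_integrableOn_Ioc_of_le ht).mp h.symm).mono_set
    Ioo_subset_Ioc_self

lemma setIntegral_Ioo_sub_rpow {T t p : ℝ} (ht : t ≤ T) (hp : -1 < p) :
    ∫ τ in Ioo t T, (T - τ) ^ p = (T - t) ^ (p + 1) / (p + 1) := by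
  rw [← integral_Ioc_eq_integral_Ioo, ← intervalIntegral.integral_of_le ht,
    intervalIntegral.integral_comp_sub_left (fun x : ℝ => x ^ p) T, sub_self,
    integral_rpow (Or.inl hp), zero_rpow (by linarith), sub_zero]

lemma memLp_ofReal_of_integrable_rpow {X : Type*} [MeasurableSpace X] {μ : Measure X}
    {f : X → ℝ} {p : ℝ} (hp : 0 < p) (hf_meas : AEStronglyMeasurable f μ) (hf : 0 ≤ᵐ[μ] f)
    (hfp : Integrable (fun x => f x ^ p) μ) : MemLp f (ENNReal.ofReal p) μ := by
  rw [← integrable_norm_rpow_iff hf_meas (by simpa using hp) ENNReal.ofReal_ne_top,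
    ENNReal.toReal_ofReal hp.le]
  refine hfp.congr ?_
  filter_upwards [hf] with x hx
  rw [Real.norm_of_nonneg hx]

lemma memLp_Ioo_sub_rpow {T t α q : ℝ} (ht : t ≤ T) (hq : 0 < q) (hα : -1 < α * q) :
    MemLp (fun τ => (T - τ) ^ α) (ENNReal.ofReal q) (volume.restrict (Ioo t T)) := by
  refine memLp_ofReal_of_integrable_rpow hq
    ((measurable_const.sub measurable_id).pow_const α).aestronglyMeasurable ?_ ?_
  · filter_upwards [ae_restrict_mem measurableSet_Ioo] with τ hτ
    exact rpow_nonneg (sub_nonneg.2 hτ.2.le) α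
  · refine (integrableOn_Ioo_sub_rpow ht hα).congr_fun (fun τ hτ => ?_) measurableSet_Ioo
    rw [← rpow_mul (sub_nonneg.2 hτ.2.le)]

lemma rpow_le_rpow_sub_mul_rpow {s T β p : ℝ} (hs : 0 < s) (hsT : s ≤ T) (hβp : β ≤ p) :
    s ^ p ≤ T ^ (p - β) * s ^ β := by
  calc s ^ p = s ^ (p - β) * s ^ β := by rw [← rpow_add hs, sub_add_cancel]
    _ ≤ T ^ (p - β) * s ^ β := by gcongr

lemma exists_le_mul_rpow_of_bounded {E : ℝ → ℝ} {T β : ℝ} (hT : 0 < T) (hβ : β ≤ 0)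
    (hE : ∃ B, ∀ t ∈ Ico 0 T, E t ≤ B) :
    ∃ C > 0, ∀ t ∈ Ico 0 T, E t ≤ C * (T - t) ^ β := by
  obtain ⟨B, hB⟩ := hE
  refine ⟨max B 1 * T ^ (-β), by positivity, fun t ht => ?_⟩
  have hTt : T ^ β ≤ (T - t) ^ β :=
    rpow_le_rpow_of_nonpos (by linarith [ht.2]) (by linarith [ht.1]) hβ
  calc E t ≤ max B 1 * (T ^ (-β) * T ^ β) := by
        rw [← rpow_add hT, neg_add_cancel, rpow_zero, mul_one]
        exact (hB t ht).trans (le_max_left _ _)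
    _ ≤ max B 1 * T ^ (-β) * (T - t) ^ β := by rw [← mul_assoc]; gcongr

lemma exists_le_mul_rpow_of_le_add_rpow {E : ℝ → ℝ} {T a b p₁ p₂ β : ℝ} (hT : 0 < T)
    (ha : 0 ≤ a) (hb : 0 ≤ b) (h₁ : β ≤ p₁) (h₂ : β ≤ p₂)
    (hE : ∀ t ∈ Ico 0 T, E t ≤ a * (T - t) ^ p₁ + b * (T - t) ^ p₂) :
    ∃ C > 0, ∀ t ∈ Ico 0 T, E t ≤ C * (T - t) ^ β := by
  refine ⟨a * T ^ (p₁ - β) + b * T ^ (p₂ - β) + 1, by positivity, fun t ht => ?_⟩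
  have hs : 0 < T - t := by linarith [ht.2]
  have hsT : T - t ≤ T := by linarith [ht.1]
  calc E t ≤ a * (T - t) ^ p₁ + b * (T - t) ^ p₂ := hE t ht
    _ ≤ a * (T ^ (p₁ - β) * (T - t) ^ β) + b * (T ^ (p₂ - β) * (T - t) ^ β) := by
        gcongr <;> exact rpow_le_rpow_sub_mul_rpow hs hsT ‹_›
    _ ≤ _ := by nlinarith [rpow_nonneg hs.le β]

lemma integrableOn_mul_sub_rpow {f : ℝ → ℝ} {r q α T t : ℝ} (hrq : r.HolderConjugate q)
    (hf_meas : Measurable f) (hf : ∀ τ, 0 ≤ f τ)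
    (hfr : IntegrableOn (fun τ => f τ ^ r) (Ioo t T)) (ht : t ≤ T) (hα : -1 < α * q) :
    IntegrableOn (fun τ => f τ * (T - τ) ^ α) (Ioo t T) := by
  have := hrq.ennrealOfReal
  exact (memLp_ofReal_of_integrable_rpow hrq.pos hf_meas.aestronglyMeasurable (ae_of_all _ hf)
    hfr).integrable_mul (memLp_Ioo_sub_rpow ht hrq.symm.pos hα)

lemma setIntegral_mul_sub_rpow_le {f : ℝ → ℝ} {s : Set ℝ} {r q α T t : ℝ}
    (hrq : r.HolderConjugate q) (hf_meas : Measurable f) (hf : ∀ τ, 0 ≤ f τ)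
    (hfr : IntegrableOn (fun τ => f τ ^ r) s) (hs : Ioo t T ⊆ s) (ht : t ≤ T)
    (hα : -1 < α * q) :
    ∫ τ in Ioo t T, f τ * (T - τ) ^ α ≤
      (∫ τ in s, f τ ^ r) ^ (1 / r) * (α * q + 1)⁻¹ ^ (1 / q) * (T - t) ^ (α + 1 / q) := by
  have hq : 0 < q := hrq.symm.pos
  have hαq : 0 < α * q + 1 := by linarith
  have hfr_nonneg : ∀ τ, 0 ≤ f τ ^ r := fun τ => rpow_nonneg (hf τ) r
  have hfr_mono : (∫ τ in Ioo t T, f τ ^ r) ^ (1 / r) ≤ (∫ τ in s, f τ ^ r) ^ (1 / r) :=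
    rpow_le_rpow (setIntegral_nonneg measurableSet_Ioo fun τ _ => hfr_nonneg τ)
      (setIntegral_mono_set hfr (ae_of_all _ hfr_nonneg) hs.eventuallyLE) hrq.one_div_nonneg
  have hgq : ∫ τ in Ioo t T, ((T - τ) ^ α) ^ q = (T - t) ^ (α * q + 1) / (α * q + 1) := by
    rw [← setIntegral_Ioo_sub_rpow ht hα]
    refine setIntegral_congr_fun measurableSet_Ioo fun τ hτ => ?_
    rw [← rpow_mul (sub_nonneg.2 hτ.2.le)]
  have hpow : ((T - t) ^ (α * q + 1) / (α * q + 1)) ^ (1 / q)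
      = (α * q + 1)⁻¹ ^ (1 / q) * (T - t) ^ (α + 1 / q) := by
    rw [div_eq_inv_mul, mul_rpow (by positivity) (rpow_nonneg (sub_nonneg.2 ht) _),
      ← rpow_mul (sub_nonneg.2 ht)]
    congr 2
    field_simp
  calc ∫ τ in Ioo t T, f τ * (T - τ) ^ α
      ≤ (∫ τ in Ioo t T, f τ ^ r) ^ (1 / r) * (∫ τ in Ioo t T, ((T - τ) ^ α) ^ q) ^ (1 / q) :=
        integral_mul_le_Lp_mul_Lq_of_nonneg hrq (ae_of_all _ hf)
          (ae_restrict_of_forall_mem measurableSet_Ioo fun τ hτ =>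
            rpow_nonneg (sub_nonneg.2 hτ.2.le) α)
          (memLp_ofReal_of_integrable_rpow hrq.pos hf_meas.aestronglyMeasurable
            (ae_of_all _ hf) (hfr.mono_set hs))
          (memLp_Ioo_sub_rpow ht hq hα)
    _ ≤ (∫ τ in s, f τ ^ r) ^ (1 / r) * (∫ τ in Ioo t T, ((T - τ) ^ α) ^ q) ^ (1 / q) := by
        gcongr
        exact rpow_nonneg (setIntegral_nonneg measurableSet_Ioo fun τ hτ =>
          rpow_nonneg (rpow_nonneg (sub_nonneg.2 hτ.2.le) α) q) _
    _ = _ := by rw [hgq, hpow, mul_assoc]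

lemma setIntegral_mul_le_of_le_sub_rpow {f G : ℝ → ℝ} {s : Set ℝ} {r q α C' T t : ℝ}
    (hrq : r.HolderConjugate q) (hf_meas : Measurable f) (hf : ∀ τ, 0 ≤ f τ)
    (hfr : IntegrableOn (fun τ => f τ ^ r) s) (hs : Ioo t T ⊆ s) (hC' : 0 ≤ C')
    (hG0 : ∀ τ, 0 ≤ G τ) (hG : ∀ τ ∈ Ioo t T, G τ ≤ C' * (T - τ) ^ α)
    (ht : t ≤ T) (hα : -1 < α * q) :
    ∫ τ in Ioo t T, f τ * G τ ≤ C' * (∫ τ in s, f τ ^ r) ^ (1 / r) *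
      (α * q + 1)⁻¹ ^ (1 / q) * (T - t) ^ (α + 1 / q) := by
  calc ∫ τ in Ioo t T, f τ * G τ ≤ ∫ τ in Ioo t T, C' * (f τ * (T - τ) ^ α) := by
        refine integral_mono_of_nonneg (ae_of_all _ fun τ => mul_nonneg (hf τ) (hG0 τ))
          ((integrableOn_mul_sub_rpow hrq hf_meas hf (hfr.mono_set hs) ht hα).const_mul C') ?_
        filter_upwards [ae_restrict_mem measurableSet_Ioo] with τ hτ
        rw [mul_left_comm]
        exact mul_le_mul_of_nonneg_left (hG τ hτ) (hf τ)
    _ ≤ _ := by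
        rw [integral_const_mul, mul_assoc C', mul_assoc C']
        gcongr
        exact setIntegral_mul_sub_rpow_le hrq hf_meas hf hfr hs ht hα

lemma setIntegral_sqrt_le_of_le_sub_rpow {G : ℝ → ℝ} {C' α T t : ℝ} (ht : t ≤ T)
    (hα : -2 < α) (hG : ∀ τ ∈ Ioo t T, G τ ≤ C' * (T - τ) ^ α) :
    ∫ τ in Ioo t T, √(G τ) ≤ √C' / (α / 2 + 1) * (T - t) ^ (α / 2 + 1) := by
  have hα' : -1 < α / 2 := by linarith
  calc ∫ τ in Ioo t T, √(G τ) ≤ ∫ τ in Ioo t T, √C' * (T - τ) ^ (α / 2) := by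
        refine integral_mono_of_nonneg (ae_of_all _ fun _ => sqrt_nonneg _)
          ((integrableOn_Ioo_sub_rpow ht hα').const_mul _) ?_
        filter_upwards [ae_restrict_mem measurableSet_Ioo] with τ hτ
        have hτ' : 0 ≤ T - τ := sub_nonneg.2 hτ.2.le
        calc √(G τ) ≤ √(C' * (T - τ) ^ α) := sqrt_le_sqrt (hG τ hτ)
          _ = √C' * (T - τ) ^ (α / 2) := by
            rw [sqrt_mul' _ (rpow_nonneg hτ' _), sqrt_eq_rpow ((T - τ) ^ α), ← rpow_mul hτ',
              mul_one_div]
    _ = _ := by rw [integral_const_mul, setIntegral_Ioo_sub_rpow ht hα']; ring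

theorem bootstrap_step_general (T r α₀ α δ C C' : ℝ) (hT : 0 < T) (hr : 1 < r)
    (hδsmall : δ < min (1 - 1 / r) (2 - α₀)) (hα : α₀ - δ < α)
    (hC : 0 ≤ C) (hC' : 0 ≤ C')
    (f G E : ℝ → ℝ) (hfmeas : Measurable f) (hf : ∀ t, 0 ≤ f t)
    (hfr : IntegrableOn (fun t => f t ^ r) (Ico 0 T))
    (hG0 : ∀ τ, 0 ≤ G τ) (hG : ∀ τ ∈ Ico (0:ℝ) T, G τ ≤ C' * (T - τ) ^ α)
    (hEbdd : ∃ B, ∀ t ∈ Ico (0:ℝ) T, E t ≤ B)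
    (hE : ∀ t ∈ Ico (0:ℝ) T,
      E t ≤ C * (∫ τ in Ioo t T, f τ * G τ) + C * ∫ τ in Ioo t T, Real.sqrt (G τ)) :
    ∃ C'' > (0:ℝ),
      (∀ t ∈ Ico (0:ℝ) T,
        E t ≤ C'' * (T - t) ^ min (1 - 1 / r + α₀ - δ) ((α₀ - δ + 2) / 2)) ∧
      α₀ < min (1 - 1 / r + α₀ - δ) ((α₀ - δ + 2) / 2) := by
  set β₁ := 1 - 1 / r + α₀ - δ with hβ₁_def
  set β₂ := (α₀ - δ + 2) / 2 with hβ₂_def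
  obtain ⟨hδ₁, hδ₂⟩ := lt_min_iff.1 hδsmall
  suffices ∃ C'' > 0, ∀ t ∈ Ico 0 T, E t ≤ C'' * (T - t) ^ min β₁ β₂ by
    obtain ⟨C'', hC'', hbound⟩ := this
    exact ⟨C'', hC'', hbound, lt_min (by linarith) (by linarith)⟩
  rcases le_or_gt (min β₁ β₂) 0 with hβ | hβ
  · exact exists_le_mul_rpow_of_bounded hT hβ hEbdd
  obtain ⟨hβ₁, hβ₂⟩ := lt_min_iff.1 hβ
  obtain ⟨q, hrq⟩ : ∃ q, r.HolderConjugate q := ⟨_, .conjExponent hr⟩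
  have hq : 1 / r + 1 / q = 1 := hrq.one_div_add_one_div.trans one_div_one
  have hαq : -1 < α * q := by
    have : α * q + 1 = q * (α + 1 / q) := by field_simp [hrq.symm.ne_zero]
    nlinarith [hrq.symm.pos]
  have hc : 0 ≤ (α * q + 1)⁻¹ ^ (1 / q) := rpow_nonneg (inv_nonneg.2 (by linarith)) _
  have hK : 0 ≤ (∫ τ in Ico 0 T, f τ ^ r) ^ (1 / r) :=
    rpow_nonneg (setIntegral_nonneg measurableSet_Ico fun τ _ => rpow_nonneg (hf τ) r) _
  refine exists_le_mul_rpow_of_le_add_rpow hT (p₁ := α + 1 / q) (p₂ := α / 2 + 1)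
    (a := C * (C' * (∫ τ in Ico 0 T, f τ ^ r) ^ (1 / r) * (α * q + 1)⁻¹ ^ (1 / q)))
    (b := C * (√C' / (α / 2 + 1))) (mul_nonneg hC (mul_nonneg (mul_nonneg hC' hK) hc))
    (mul_nonneg hC (div_nonneg (sqrt_nonneg _) (by linarith)))
    ((min_le_left _ _).trans (by linarith)) ((min_le_right _ _).trans (by linarith))
    fun t ht => (hE t ht).trans ?_
  have hsub : Ioo t T ⊆ Ico 0 T := fun τ hτ => ⟨ht.1.trans hτ.1.le, hτ.2⟩
  have hGt : ∀ τ ∈ Ioo t T, G τ ≤ C' * (T - τ) ^ α := fun τ hτ => hG τ (hsub hτ)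
  rw [mul_assoc C, mul_assoc C]
  gcongr
  · exact setIntegral_mul_le_of_le_sub_rpow hrq hfmeas hf hfr hsub hC' hG0 hGt ht.2.le hαq
  · exact setIntegral_sqrt_le_of_le_sub_rpow ht.2.le (by linarith) hGt

/-- Abstract bootstrap step of the energy-drain theorem: from
`E(t) ≤ C ∫_t^T f G + C ∫_t^T √G` with `f ∈ L^r`, `G(τ) ≤ C'(T−τ)^α`, `α > α₀ − δ`,
one gets `E(t) ≤ C'' (T−t)^β` with `β = min(1 − 1/r + α₀ − δ, (α₀ − δ + 2)/2) > α₀`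
provided `δ < min(1 − 1/r, 2 − α₀)`. -/
theorem bootstrap_step (T r α₀ α δ C C' : ℝ) (hT : 0 < T) (hr : 1 < r) (hα₀ : α₀ < 2)
    (hδ : 0 < δ) (hδsmall : δ < min (1 - 1 / r) (2 - α₀)) (hα : α₀ - δ < α)
    (hC : 0 ≤ C) (hC' : 0 ≤ C')
    (f G E : ℝ → ℝ) (hfmeas : Measurable f) (hf : ∀ t, 0 ≤ f t)
    (hfr : IntegrableOn (fun t => f t ^ r) (Ico 0 T))
    (hG0 : ∀ τ, 0 ≤ G τ) (hG : ∀ τ ∈ Ico (0:ℝ) T, G τ ≤ C' * (T - τ) ^ α)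
    (hGmeas : Measurable G)
    (hE0 : ∀ t, 0 ≤ E t) (hEbdd : ∃ B, ∀ t ∈ Ico (0:ℝ) T, E t ≤ B)
    (hE : ∀ t ∈ Ico (0:ℝ) T,
      E t ≤ C * (∫ τ in Ioo t T, f τ * G τ) + C * ∫ τ in Ioo t T, Real.sqrt (G τ)) :
    ∃ C'' > (0:ℝ),
      (∀ t ∈ Ico (0:ℝ) T,
        E t ≤ C'' * (T - t) ^ min (1 - 1 / r + α₀ - δ) ((α₀ - δ + 2) / 2)) ∧
      α₀ < min (1 - 1 / r + α₀ - δ) ((α₀ - δ + 2) / 2) :=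
  bootstrap_step_general T r α₀ α δ C C' hT hr hδsmall hα hC hC' f G E hfmeas hf hfr hG0 hG hEbdd hE
end
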